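/- arXiv:1406.4549 — 2 statements merged into one kernel-verified Lean document; each statement's English description precedes it below -/
import Mathlib

section
/- Let E_1,…,E_n be pairwise disjoint measurable subsets of [0,1]^d of measure 1/n each with ∪E_i of full measure and each of diameter at most 2√(d+3)n^{−1/d}. Let f = g·1_Ω where g is Lipschitz and bounded by D on [0,1]^d and ∂Ω has finite (d−1)-dimensional Minkowski content. With x_i independent and uniform on E_i, the estimator μ̂ = (1/n)Σ_i f(x_i) satisfies Var[μ̂] = O(n^{−1−1/d}). -/
open MeasureTheory ProbabilityTheory Filter
open scoped ENNReal

/-!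
Within a cell, the sample `f (x i)` has variance at most the square of the oscillation of
`f = 1_S · g` on the cell. That oscillation is at most `|M| δ` on a cell contained in `S` or in
`Sᶜ`, where `δ ≍ n^{-1/d}` bounds the diameters, and at most `2D` on a cell meeting both. Each cell
of the second kind lies in the `δ`-thickening of `∂S`, whose volume is `O(δ)` by the Minkowski
content hypothesis, so there are `O(nδ)` of them. By independence,
`Var μ̂ = n⁻² ∑ Var f(x i) ≤ n⁻² (O(nδ) D² + n M² δ²) = O(n^{-1-1/d})`.
-/

theorem IsPreconnected.inter_frontier_nonempty {X : Type*} [TopologicalSpace X] {t s : Set X}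
    (ht : IsPreconnected t) (hts : (t ∩ s).Nonempty) (hts' : (t \ s).Nonempty) :
    (t ∩ frontier s).Nonempty := by
  by_contra h
  have hsub : t ⊆ interior s ∪ (closure s)ᶜ := fun x hxt => by
    have hx : x ∉ closure s \ interior s := fun hx => h ⟨x, hxt, hx⟩
    by_cases hxs : x ∈ closure s
    exacts [Or.inl (not_not.1 fun hi => hx ⟨hxs, hi⟩), Or.inr hxs]
  obtain ⟨u, hut, hus⟩ := hts
  obtain ⟨v, hvt, hvs⟩ := hts'
  have hu : u ∈ interior s := (hsub hut).resolve_right (not_not.2 (subset_closure hus))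
  exact hvs (interior_subset (ht.subset_left_of_subset_union isOpen_interior
    isClosed_closure.isOpen_compl (disjoint_compl_right.mono_left interior_subset_closure)
    hsub ⟨u, hut, hu⟩ hvt))

theorem exists_mem_frontier_dist_le {E : Type*} [NormedAddCommGroup E] [NormedSpace ℝ E]
    {s : Set E} {u v : E} (hu : u ∈ s) (hv : v ∉ s) :
    ∃ p ∈ frontier s, dist u p ≤ dist u v := by
  obtain ⟨p, hp, hps⟩ := (convex_segment u v).isPreconnected.inter_frontier_nonempty
    ⟨u, left_mem_segment ℝ u v, hu⟩ ⟨v, right_mem_segment ℝ u v, hv⟩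
  exact ⟨p, hps, by linarith [dist_add_dist_of_mem_segment hp, dist_nonneg (x := p) (y := v)]⟩

theorem subset_cthickening_frontier_of_diam_le {E : Type*} [NormedAddCommGroup E]
    [NormedSpace ℝ E] {A s : Set E} {δ : ℝ} (hA : Bornology.IsBounded A)
    (hdiam : Metric.diam A ≤ δ) (hAs : (A ∩ s).Nonempty) (hAs' : (A \ s).Nonempty) :
    A ⊆ Metric.cthickening δ (frontier s) := by
  obtain ⟨u, huA, hus⟩ := hAs
  obtain ⟨v, hvA, hvs⟩ := hAs'
  intro w hw
  obtain ⟨p, hp, hwp⟩ : ∃ p ∈ frontier s, dist w p ≤ δ := by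
    by_cases hws : w ∈ s
    · obtain ⟨p, hp, hwp⟩ := exists_mem_frontier_dist_le hws hvs
      exact ⟨p, hp, hwp.trans ((Metric.dist_le_diam_of_mem hA hw hvA).trans hdiam)⟩
    · obtain ⟨p, hp, hwp⟩ := exists_mem_frontier_dist_le (s := sᶜ) hws (not_not.2 hus)
      exact ⟨p, frontier_compl s ▸ hp,
        hwp.trans ((Metric.dist_le_diam_of_mem hA hw huA).trans hdiam)⟩
  exact Metric.mem_cthickening_of_dist_le w p δ _ hp hwp

theorem isBounded_setOf_forall_mem_Icc {ι : Type*} [Fintype ι] (a b : ι → ℝ) :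
    Bornology.IsBounded {y : EuclideanSpace ℝ ι | ∀ j, y j ∈ Set.Icc (a j) (b j)} :=
  ((EuclideanSpace.equiv ι ℝ).toHomeomorph.isCompact_preimage.2
    (isCompact_univ_pi fun j => isCompact_Icc (a := a j) (b := b j))).isBounded.subset
    fun _ hy j _ => hy j

theorem exists_measure_cthickening_le_mul {X : Type*} [PseudoMetricSpace X] [MeasurableSpace X]
    {μ : Measure X} {F : Set X} {m R : ℝ} (hR : μ (Metric.cthickening R F) ≠ ∞)
    (hm : Tendsto (fun ε => (μ (Metric.cthickening ε F)).toReal / (2 * ε))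
      (nhdsWithin 0 (Set.Ioi 0)) (nhds m)) :
    ∃ K, ∀ ε, 0 < ε → ε ≤ R → (μ (Metric.cthickening ε F)).toReal ≤ K * ε := by
  obtain ⟨ε₀, hε₀, hsmall⟩ := (nhdsGT_basis_of_exists_gt ⟨1, zero_lt_one⟩).eventually_iff.1
    (hm.eventually_lt_const (lt_add_one m))
  set V := (μ (Metric.cthickening R F)).toReal
  refine ⟨max (2 * (m + 1)) (V / ε₀), fun ε hε hεR => ?_⟩
  rcases lt_or_ge ε ε₀ with hε₀' | hε₀'
  · have := (div_lt_iff₀ (by positivity)).1 (hsmall ⟨hε, hε₀'⟩)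
    nlinarith [le_max_left (2 * (m + 1)) (V / ε₀)]
  · calc (μ (Metric.cthickening ε F)).toReal ≤ V :=
          ENNReal.toReal_mono hR (measure_mono (Metric.cthickening_mono hεR F))
    _ = V / ε₀ * ε₀ := by field_simp
    _ ≤ max (2 * (m + 1)) (V / ε₀) * ε := by gcongr; exact le_max_right _ _

theorem card_mul_le_measure_of_pairwise_disjoint {ι α : Type*} [MeasurableSpace α]
    {μ : Measure α} {E : ι → Set α} {s : Finset ι} {T : Set α} {c : ℝ≥0∞}
    (hE : ∀ i, MeasurableSet (E i)) (hdisj : Pairwise (Function.onFun Disjoint E))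
    (hc : ∀ i, μ (E i) = c) (hT : ∀ i ∈ s, E i ⊆ T) :
    s.card * c ≤ μ T :=
  calc s.card * c = μ (⋃ i ∈ s, E i) := by
        rw [measure_biUnion_finset (fun i _ j _ hij => hdisj hij) fun i _ => hE i]
        simp [hc]
  _ ≤ μ T := measure_mono (Set.iUnion₂_subset hT)

open Classical in
noncomputable def boundaryIndices {ι α : Type*} [Fintype ι] (A : ι → Set α) (s : Set α) :
    Finset ι :=
  Finset.univ.filter fun i => (A i ∩ s).Nonempty ∧ (A i \ s).Nonempty

theorem mem_boundaryIndices {ι α : Type*} [Fintype ι] {A : ι → Set α} {s : Set α} {i : ι} :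
    i ∈ boundaryIndices A s ↔ (A i ∩ s).Nonempty ∧ (A i \ s).Nonempty := by
  simp [boundaryIndices]

theorem card_boundaryIndices_le {E : Type*} [NormedAddCommGroup E]
    [NormedSpace ℝ E] [MeasurableSpace E] {μ : Measure E} {n : ℕ} (hn : 0 < n)
    {A : Fin n → Set E} {s : Set E} {δ : ℝ} (hAm : ∀ i, MeasurableSet (A i))
    (hdisj : Pairwise (Function.onFun Disjoint A)) (hvol : ∀ i, μ (A i) = 1 / n)
    (hAb : ∀ i, Bornology.IsBounded (A i)) (hdiam : ∀ i, Metric.diam (A i) ≤ δ)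
    (hfin : μ (Metric.cthickening δ (frontier s)) ≠ ∞) :
    ((boundaryIndices A s).card : ℝ) ≤ n * (μ (Metric.cthickening δ (frontier s))).toReal := by
  have h := ENNReal.toReal_mono hfin (card_mul_le_measure_of_pairwise_disjoint hAm hdisj hvol
    fun i hi => subset_cthickening_frontier_of_diam_le (hAb i) (hdiam i)
      (mem_boundaryIndices.1 hi).1 (mem_boundaryIndices.1 hi).2)
  rw [ENNReal.toReal_mul, ENNReal.toReal_div] at h
  simp only [ENNReal.toReal_natCast, ENNReal.toReal_one] at h
  rwa [← div_le_iff₀' (by exact_mod_cast hn), ← mul_one_div]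

theorem abs_indicator_sub_indicator_le {α : Type*} {s A : Set α} {g : α → ℝ}
    (hA : ¬((A ∩ s).Nonempty ∧ (A \ s).Nonempty)) {u v : α} (hu : u ∈ A) (hv : v ∈ A) :
    |s.indicator g u - s.indicator g v| ≤ |g u - g v| := by
  by_cases hus : u ∈ s <;> by_cases hvs : v ∈ s
  · simp [hus, hvs]
  · exact absurd ⟨⟨u, hu, hus⟩, v, hv, hvs⟩ hA
  · exact absurd ⟨⟨v, hv, hvs⟩, u, hu, hus⟩ hA
  · simp [hus, hvs]

theorem abs_indicator_sub_indicator_le_two_mul {α : Type*} {s A : Set α} {g : α → ℝ} {D : ℝ}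
    (hgD : ∀ u ∈ A, |g u| ≤ D) {u v : α} (hu : u ∈ A) (hv : v ∈ A) :
    |s.indicator g u - s.indicator g v| ≤ 2 * D := by
  have hfD : ∀ u ∈ A, |s.indicator g u| ≤ D := fun u hu => by
    by_cases hus : u ∈ s <;> simp [hus, hgD u hu, (abs_nonneg _).trans (hgD u hu)]
  linarith [abs_sub (s.indicator g u) (s.indicator g v), hfD u hu, hfD v hv]

theorem abs_indicator_sub_indicator_le_mul_diam {E : Type*} [SeminormedAddCommGroup E]
    {s A : Set E} {g : E → ℝ} {M δ : ℝ} (hLip : ∀ u v, |g u - g v| ≤ M * ‖u - v‖)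
    (hA : Bornology.IsBounded A) (hdiam : Metric.diam A ≤ δ)
    (hAs : ¬((A ∩ s).Nonempty ∧ (A \ s).Nonempty)) {u v : E} (hu : u ∈ A) (hv : v ∈ A) :
    |s.indicator g u - s.indicator g v| ≤ |M| * δ :=
  calc |s.indicator g u - s.indicator g v| ≤ |g u - g v| :=
        abs_indicator_sub_indicator_le hAs hu hv
  _ ≤ M * dist u v := dist_eq_norm u v ▸ hLip u v
  _ ≤ |M| * δ := mul_le_mul (le_abs_self M)
      ((Metric.dist_le_diam_of_mem hA hu hv).trans hdiam) dist_nonneg (abs_nonneg M)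

theorem aemeasurable_and_ae_mem_of_map_eq_smul_restrict {Ω α : Type*} [MeasurableSpace Ω]
    [MeasurableSpace α] {μ : Measure Ω} {ν : Measure α} {X : Ω → α} {A : Set α} {c : ℝ≥0∞}
    (h : μ.map X = c • ν.restrict A) (hA : MeasurableSet A) (hc : c * ν A ≠ 0) :
    AEMeasurable X μ ∧ ∀ᵐ ω ∂μ, X ω ∈ A := by
  have hX : AEMeasurable X μ := .of_map_ne_zero fun h0 => hc (by
    simpa [hA] using congrArg (· Set.univ) (h.symm.trans h0))
  exact ⟨hX, ae_of_ae_map hX (h ▸ Measure.ae_smul_measure (ae_restrict_mem hA) c)⟩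

theorem exists_ae_mem_Icc_of_abs_sub_le {Ω α : Type*} [MeasurableSpace Ω] {μ : Measure Ω}
    [NeZero μ] {X : Ω → α} {A : Set α} {f : α → ℝ} {w : ℝ} (hX : ∀ᵐ ω ∂μ, X ω ∈ A)
    (hf : ∀ u ∈ A, ∀ v ∈ A, |f u - f v| ≤ w) :
    ∃ a, ∀ᵐ ω ∂μ, f (X ω) ∈ Set.Icc (a - w) (a + w) := by
  obtain ⟨ω₀, hω₀⟩ := hX.exists
  refine ⟨f (X ω₀), hX.mono fun ω hω => ?_⟩
  have := abs_sub_le_iff.1 (hf _ hω _ hω₀)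
  constructor <;> linarith [this.1, this.2]

theorem variance_const_mul_sum_comp_le {ι Ω α : Type*} [Fintype ι] [MeasurableSpace Ω]
    [MeasurableSpace α] {μ : Measure Ω} [IsProbabilityMeasure μ] {X : ι → Ω → α}
    (hind : iIndepFun X μ) {f : α → ℝ} (hf : Measurable f) {A : ι → Set α}
    (hXm : ∀ i, AEMeasurable (X i) μ) (hXA : ∀ i, ∀ᵐ ω ∂μ, X i ω ∈ A i) {w : ι → ℝ}
    (hw : ∀ i, ∀ u ∈ A i, ∀ v ∈ A i, |f u - f v| ≤ w i) (c : ℝ) :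
    variance (fun ω => c * ∑ i, f (X i ω)) μ ≤ c ^ 2 * ∑ i, w i ^ 2 := by
  choose a ha using fun i => exists_ae_mem_Icc_of_abs_sub_le (hXA i) (hw i)
  have hY : ∀ i, AEMeasurable (fun ω => f (X i ω)) μ := fun i => hf.comp_aemeasurable (hXm i)
  have hsum : (fun ω => ∑ i, f (X i ω)) = ∑ i, fun ω => f (X i ω) := by ext; simp
  rw [variance_const_mul, hsum, IndepFun.variance_sum
    (fun i _ => memLp_of_bounded (ha i) (hY i).aestronglyMeasurable 2)
    (fun i _ j _ hij => (hind.comp (fun _ => f) fun _ => hf).indepFun hij)]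
  gcongr with i
  calc _ ≤ ((a i + w i - (a i - w i)) / 2) ^ 2 := variance_le_sq_of_bounded (ha i) (hY i)
  _ = w i ^ 2 := by ring

theorem sum_sq_ite_le {ι : Type*} [Fintype ι] [DecidableEq ι] (s : Finset ι) (a b : ℝ) :
    ∑ i, (if i ∈ s then a else b) ^ 2 ≤ s.card * a ^ 2 + Fintype.card ι * b ^ 2 := by
  calc ∑ i, (if i ∈ s then a else b) ^ 2 ≤ ∑ i, ((if i ∈ s then a ^ 2 else 0) + b ^ 2) := by
        gcongr with i; split_ifs <;> nlinarith [sq_nonneg b]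
  _ = s.card * a ^ 2 + Fintype.card ι * b ^ 2 := by
        simp [Finset.sum_add_distrib, Finset.sum_ite_mem]

theorem variance_const_mul_sum_indicator_le {ι Ω E : Type*} [Fintype ι] [DecidableEq ι]
    [MeasurableSpace Ω] [SeminormedAddCommGroup E] [MeasurableSpace E] {μ : Measure Ω}
    [IsProbabilityMeasure μ] {X : ι → Ω → E} (hind : iIndepFun X μ) {A : ι → Set E}
    (hXm : ∀ i, AEMeasurable (X i) μ) (hXA : ∀ i, ∀ᵐ ω ∂μ, X i ω ∈ A i) {s : Set E}
    (hs : MeasurableSet s) {g : E → ℝ} (hg : Measurable g) {M D δ : ℝ}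
    (hLip : ∀ u v, |g u - g v| ≤ M * ‖u - v‖) (hgD : ∀ i, ∀ u ∈ A i, |g u| ≤ D)
    (hAb : ∀ i, Bornology.IsBounded (A i)) (hdiam : ∀ i, Metric.diam (A i) ≤ δ) (c : ℝ) :
    variance (fun ω => c * ∑ i, s.indicator g (X i ω)) μ
      ≤ c ^ 2 * ((boundaryIndices A s).card * (2 * D) ^ 2 + Fintype.card ι * (|M| * δ) ^ 2) := by
  refine (variance_const_mul_sum_comp_le hind (hg.indicator hs) hXm hXA
    (w := fun i => if i ∈ boundaryIndices A s then 2 * D else |M| * δ) (fun i u hu v hv => ?_)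
    c).trans (by gcongr; exact sum_sq_ite_le _ _ _)
  split_ifs with hi
  exacts [abs_indicator_sub_indicator_le_two_mul (hgD i) hu hv,
    abs_indicator_sub_indicator_le_mul_diam hLip (hAb i) (hdiam i) (mt mem_boundaryIndices.2 hi)
      hu hv]

theorem stratified_variance_indicator_general (d : ℕ)
    (S : Set (EuclideanSpace ℝ (Fin d)))
    (hS : S ⊆ {y : EuclideanSpace ℝ (Fin d) | ∀ j, y j ∈ Set.Icc (0 : ℝ) 1})
    (hSmeas : MeasurableSet S)
    (MC : ℝ)
    (hMC : Tendsto (fun ε : ℝ =>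
        (volume (Metric.cthickening ε (frontier S))).toReal / (2 * ε))
      (nhdsWithin 0 (Set.Ioi 0)) (nhds MC))
    (g : EuclideanSpace ℝ (Fin d) → ℝ) (hgm : Measurable g) (M D : ℝ)
    (hLip : ∀ u v, |g u - g v| ≤ M * ‖u - v‖)
    (hbdd : ∀ u ∈ {y : EuclideanSpace ℝ (Fin d) | ∀ j, y j ∈ Set.Icc (0 : ℝ) 1}, |g u| ≤ D) :
    ∃ C : ℝ, ∀ n : ℕ, 0 < n →
      ∀ (Ω' : Type) (_ : MeasureSpace Ω'), IsProbabilityMeasure (ℙ : Measure Ω') →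
      ∀ E : Fin n → Set (EuclideanSpace ℝ (Fin d)),
        (∀ i, MeasurableSet (E i)) →
        (∀ i, E i ⊆ {y : EuclideanSpace ℝ (Fin d) | ∀ j, y j ∈ Set.Icc (0 : ℝ) 1}) →
        Pairwise (Function.onFun Disjoint E) →
        (∀ i, volume (E i) = 1 / n) →
        volume ({y : EuclideanSpace ℝ (Fin d) | ∀ j, y j ∈ Set.Icc (0 : ℝ) 1}
          \ ⋃ i, E i) = 0 →
        (∀ i, Metric.diam (E i) ≤ 2 * Real.sqrt (d + 3) * (n : ℝ) ^ (-(1 : ℝ) / d)) →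
        ∀ x : Fin n → Ω' → EuclideanSpace ℝ (Fin d),
          iIndepFun x ℙ →
          (∀ i, Measure.map (x i) ℙ = (n : ℝ≥0∞) • volume.restrict (E i)) →
          variance (fun ω => (1 / (n : ℝ)) * ∑ i, Set.indicator S g (x i ω)) ℙ
            ≤ C * (n : ℝ) ^ (-(1 : ℝ) - 1 / d) := by
  set a := 2 * Real.sqrt (d + 3)
  have hcube := isBounded_setOf_forall_mem_Icc (ι := Fin d) (fun _ => 0) (fun _ => 1)
  have hfrontier : Bornology.IsBounded (frontier S) :=
    (hcube.subset hS).closure.subset frontier_subset_closure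
  obtain ⟨K, hK⟩ :=
    exists_measure_cthickening_le_mul (R := a) hfrontier.cthickening.measure_lt_top.ne hMC
  refine ⟨a * (4 * D ^ 2 * K + a * M ^ 2),
    fun n hn Ω' _ _ E hEm hEQ hdisj hvolE _ hdiam x hindep hmap => ?_⟩
  set ν := (n : ℝ) ^ (-(1 : ℝ) / d)
  have hν1 : ν ≤ 1 := Real.rpow_le_one_of_one_le_of_nonpos (by exact_mod_cast hn)
    (by rw [neg_div]; exact neg_nonpos.2 (by positivity))
  have hx : ∀ i, AEMeasurable (x i) ℙ ∧ ∀ᵐ ω ∂ℙ, x i ω ∈ E i := fun i =>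
    aemeasurable_and_ae_mem_of_map_eq_smul_restrict (hmap i) (hEm i)
      (by simp [hvolE, ENNReal.mul_inv_cancel, hn.ne'])
  have hB : ((boundaryIndices E S).card : ℝ) ≤ n * (K * (a * ν)) :=
    (card_boundaryIndices_le hn hEm hdisj hvolE (fun i => hcube.subset (hEQ i)) hdiam
      hfrontier.cthickening.measure_lt_top.ne).trans
      (by gcongr; exact hK _ (by positivity) (mul_le_of_le_one_right (by positivity) hν1))
  have hvar := variance_const_mul_sum_indicator_le hindep (fun i => (hx i).1) (fun i => (hx i).2)
    hSmeas hgm hLip (fun i u hu => hbdd u (hEQ i hu)) (fun i => hcube.subset (hEQ i)) hdiam (1 / n)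
  rw [Fintype.card_fin] at hvar
  rw [show -(1 : ℝ) - 1 / d = -1 + -(1 : ℝ) / d by ring, Real.rpow_add (by positivity),
    Real.rpow_neg_one]
  calc _ ≤ _ := hvar
  _ ≤ (1 / (n : ℝ)) ^ 2 * (n * (K * (a * ν)) * (2 * D) ^ 2 + n * (|M| * (a * ν)) ^ 2) := by
        gcongr
  _ = (n : ℝ)⁻¹ * ν * (a * (4 * D ^ 2 * K + a * M ^ 2 * ν)) := by
        field_simp
        rw [sq_abs]
        ring
  _ ≤ (n : ℝ)⁻¹ * ν * (a * (4 * D ^ 2 * K + a * M ^ 2)) := by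
        gcongr _ * (_ * (_ + ?_))
        exact mul_le_of_le_one_right (by positivity) hν1
  _ = a * (4 * D ^ 2 * K + a * M ^ 2) * ((n : ℝ)⁻¹ * ν) := by ring

/-- Variance bound `O(n^{-1-1/d})` for the stratified estimator of a
discontinuous integrand `f = g·1_Ω` with Lipschitz `g` and `∂Ω` of finite
`(d-1)`-dimensional Minkowski content. -/
theorem stratified_variance_indicator (d : ℕ) (hd : 1 ≤ d)
    (S : Set (EuclideanSpace ℝ (Fin d)))
    (hS : S ⊆ {y : EuclideanSpace ℝ (Fin d) | ∀ j, y j ∈ Set.Icc (0 : ℝ) 1})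
    (hSmeas : MeasurableSet S)
    (MC : ℝ)
    (hMC : Tendsto (fun ε : ℝ =>
        (volume (Metric.cthickening ε (frontier S))).toReal / (2 * ε))
      (nhdsWithin 0 (Set.Ioi 0)) (nhds MC))
    (g : EuclideanSpace ℝ (Fin d) → ℝ) (hgm : Measurable g) (M D : ℝ)
    (hLip : ∀ u v, |g u - g v| ≤ M * ‖u - v‖)
    (hbdd : ∀ u ∈ {y : EuclideanSpace ℝ (Fin d) | ∀ j, y j ∈ Set.Icc (0 : ℝ) 1}, |g u| ≤ D) :
    ∃ C : ℝ, ∀ n : ℕ, 0 < n →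
      ∀ (Ω' : Type) (_ : MeasureSpace Ω'), IsProbabilityMeasure (ℙ : Measure Ω') →
      ∀ E : Fin n → Set (EuclideanSpace ℝ (Fin d)),
        (∀ i, MeasurableSet (E i)) →
        (∀ i, E i ⊆ {y : EuclideanSpace ℝ (Fin d) | ∀ j, y j ∈ Set.Icc (0 : ℝ) 1}) →
        Pairwise (Function.onFun Disjoint E) →
        (∀ i, volume (E i) = 1 / n) →
        volume ({y : EuclideanSpace ℝ (Fin d) | ∀ j, y j ∈ Set.Icc (0 : ℝ) 1}
          \ ⋃ i, E i) = 0 →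
        (∀ i, Metric.diam (E i) ≤ 2 * Real.sqrt (d + 3) * (n : ℝ) ^ (-(1 : ℝ) / d)) →
        ∀ x : Fin n → Ω' → EuclideanSpace ℝ (Fin d),
          iIndepFun x ℙ →
          (∀ i, Measure.map (x i) ℙ = (n : ℝ≥0∞) • volume.restrict (E i)) →
          variance (fun ω => (1 / (n : ℝ)) * ∑ i, Set.indicator S g (x i ω)) ℙ
            ≤ C * (n : ℝ) ^ (-(1 : ℝ) - 1 / d) :=
  stratified_variance_indicator_general d S hS hSmeas MC hMC g hgm M D hLip hbdd
end

section
/- Let b ≥ 2 and α = 1, and let μ̂ = (1/n)Σ_{j=0}^k Σ_{ℓ=1}^{a_j} b^j μ̂_{jℓ} where n = Σ_{j=0}^k a_j b^j in base b with a_k > 0, and Var(μ̂_{jℓ}) ≤ C·b^{−2j}. Then Var(μ̂) ≤ C(b−1)²(k+1)²/n², i.e., Var(μ̂) = O(n^{−2}(log n)²). -/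
/-!
Since `√Var X` is the `L²` norm of `X - 𝔼 X`, Minkowski's inequality makes it subadditive,
whatever the correlations between the summands. Each rescaled term `b ^ j * μ̂_{jℓ}` has
variance at most `C`, and there are `∑ a_j ≤ (k + 1)(b - 1)` of them, so the variance of the sum
is at most `((k + 1)(b - 1))² C`; the factor `1 / n` contributes `1 / n²`.
-/

open MeasureTheory ProbabilityTheory Finset

namespace ProbabilityTheory

variable {Ω ι : Type*} {m : MeasurableSpace Ω} {μ : Measure Ω}

variable (μ) in
lemma sqrt_variance_eq_toReal_eLpNorm (X : Ω → ℝ) :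
    √(Var[X; μ]) = (eLpNorm (fun ω => X ω - μ[X]) 2 μ).toReal := by
  have hevar : eVar[X; μ] = eLpNorm (fun ω => X ω - μ[X]) 2 μ ^ 2 := by
    rw [evariance, eLpNorm_eq_lintegral_rpow_enorm_toReal two_ne_zero ENNReal.ofNat_ne_top,
      ← ENNReal.rpow_natCast _ 2, ← ENNReal.rpow_mul]
    norm_num
  rw [variance, hevar, ENNReal.toReal_pow, Real.sqrt_sq ENNReal.toReal_nonneg]

lemma sqrt_variance_fun_sum_le [IsFiniteMeasure μ] (s : Finset ι) {X : ι → Ω → ℝ}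
    (hX : ∀ i ∈ s, MemLp (X i) 2 μ) :
    √(Var[fun ω => ∑ i ∈ s, X i ω; μ]) ≤ ∑ i ∈ s, √(Var[X i; μ]) := by
  have hcent : ∀ i ∈ s, MemLp (fun ω => X i ω - μ[X i]) 2 μ :=
    fun i hi => (hX i hi).sub (memLp_const _)
  have hsum_cent : (fun ω => ∑ i ∈ s, X i ω - μ[fun ω => ∑ i ∈ s, X i ω])
      = ∑ i ∈ s, fun ω => X i ω - μ[X i] := by
    funext ω
    rw [integral_finsetSum s fun i hi => (hX i hi).integrable one_le_two, Finset.sum_apply,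
      Finset.sum_sub_distrib]
  simp only [sqrt_variance_eq_toReal_eLpNorm]
  rw [hsum_cent, ← ENNReal.toReal_sum fun i hi => (hcent i hi).eLpNorm_ne_top]
  exact ENNReal.toReal_mono (ENNReal.sum_ne_top.2 fun i hi => (hcent i hi).eLpNorm_ne_top)
    (eLpNorm_sum_le (fun i hi => (hcent i hi).1) one_le_two)

lemma variance_fun_sum_le_card_sq_mul [IsFiniteMeasure μ] {s : Finset ι} {X : ι → Ω → ℝ}
    {v : ℝ} (hX : ∀ i ∈ s, MemLp (X i) 2 μ) (hv : ∀ i ∈ s, Var[X i; μ] ≤ v) (hv₀ : 0 ≤ v) :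
    Var[fun ω => ∑ i ∈ s, X i ω; μ] ≤ (#s : ℝ) ^ 2 * v :=
  calc Var[fun ω => ∑ i ∈ s, X i ω; μ] = √(Var[fun ω => ∑ i ∈ s, X i ω; μ]) ^ 2 :=
        (Real.sq_sqrt (variance_nonneg _ _)).symm
    _ ≤ (∑ i ∈ s, √(Var[X i; μ])) ^ 2 :=
        pow_le_pow_left₀ (Real.sqrt_nonneg _) (sqrt_variance_fun_sum_le s hX) 2
    _ ≤ (∑ _i ∈ s, √v) ^ 2 :=
        pow_le_pow_left₀ (sum_nonneg fun _ _ => Real.sqrt_nonneg _)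
          (sum_le_sum fun i hi => Real.sqrt_le_sqrt (hv i hi)) 2
    _ = (#s : ℝ) ^ 2 * v := by rw [sum_const, nsmul_eq_mul, mul_pow, Real.sq_sqrt hv₀]

lemma variance_const_mul_le_of_le_mul_inv_sq {X : Ω → ℝ} {c C : ℝ} (hC : 0 ≤ C)
    (hX : Var[X; μ] ≤ C * (c ^ 2)⁻¹) : Var[fun ω => c * X ω; μ] ≤ C :=
  calc Var[fun ω => c * X ω; μ] = c ^ 2 * Var[X; μ] := variance_const_mul _ _ _
    _ ≤ c ^ 2 * (C * (c ^ 2)⁻¹) := mul_le_mul_of_nonneg_left hX (sq_nonneg c)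
    _ = C * (c ^ 2 * (c ^ 2)⁻¹) := by ring
    _ ≤ C := mul_le_of_le_one_right hC mul_inv_le_one

end ProbabilityTheory

lemma card_sigma_range_le {k m : ℕ} {a : ℕ → ℕ} (ha : ∀ j, j ≤ k → a j ≤ m) :
    #((range (k + 1)).sigma fun j => range (a j)) ≤ (k + 1) * m :=
  calc #((range (k + 1)).sigma fun j => range (a j)) = ∑ j ∈ range (k + 1), a j := by
        simp only [card_sigma, card_range]
    _ ≤ #(range (k + 1)) • m :=
        sum_le_card_nsmul _ _ m fun j hj => ha j (Nat.lt_succ_iff.mp (mem_range.mp hj))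
    _ = (k + 1) * m := by rw [card_range, smul_eq_mul]

theorem variance_rate_extension_critical_general (b : ℕ) (hb : 2 ≤ b) (k n : ℕ)
    {Ω : Type*} [MeasureSpace Ω] [IsProbabilityMeasure (ℙ : Measure Ω)]
    (a : ℕ → ℕ) (ha : ∀ j, j ≤ k → a j ≤ b - 1)
    (Y : ℕ → ℕ → Ω → ℝ) (hY : ∀ j ℓ, MemLp (Y j ℓ) 2 ℙ)
    (C : ℝ) (hC : 0 ≤ C)
    (hvar : ∀ j ℓ, j ≤ k → ℓ < a j →
      variance (Y j ℓ) ℙ ≤ C * ((b : ℝ) ^ (2 * j))⁻¹) :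
    variance (fun ω => (1 / (n : ℝ)) * ∑ j ∈ Finset.range (k + 1),
        ∑ ℓ ∈ Finset.range (a j), (b : ℝ) ^ j * Y j ℓ ω) ℙ
      ≤ C * ((b : ℝ) - 1) ^ 2 * ((k : ℝ) + 1) ^ 2 / (n : ℝ) ^ 2 := by
  set s := (range (k + 1)).sigma fun j => range (a j)
  have hterm : ∀ p ∈ s, Var[fun ω => (b : ℝ) ^ p.1 * Y p.1 p.2 ω; ℙ] ≤ C := by
    rintro ⟨j, ℓ⟩ hp
    simp only [s, mem_sigma, mem_range] at hp
    refine variance_const_mul_le_of_le_mul_inv_sq hC ?_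
    rw [← pow_mul']
    exact hvar j ℓ (by omega) hp.2
  have hcard : (#s : ℝ) ≤ ((k : ℝ) + 1) * ((b : ℝ) - 1) := by
    rw [← Nat.cast_pred (by omega : 0 < b)]
    exact_mod_cast card_sigma_range_le ha
  have hsum := variance_fun_sum_le_card_sq_mul (fun p _ => (hY p.1 p.2).const_mul _) hterm hC
  simp only [sum_sigma']
  rw [variance_const_mul, one_div_pow, one_div_mul_eq_div]
  gcongr
  calc _ ≤ (#s : ℝ) ^ 2 * C := hsum
    _ ≤ (((k : ℝ) + 1) * ((b : ℝ) - 1)) ^ 2 * C := by gcongr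
    _ = C * ((b : ℝ) - 1) ^ 2 * ((k : ℝ) + 1) ^ 2 := by ring

/-- Variance-rate extension for the critical rate `α = 1`: the base-`b` digit
decomposition gives `Var(μ̂) ≤ C(b-1)²(k+1)²/n² = O(n^{-2}(log n)²)`. -/
theorem variance_rate_extension_critical (b : ℕ) (hb : 2 ≤ b) (k n : ℕ) (hn : 0 < n)
    {Ω : Type*} [MeasureSpace Ω] [IsProbabilityMeasure (ℙ : Measure Ω)]
    (a : ℕ → ℕ) (ha : ∀ j, j ≤ k → a j ≤ b - 1) (hak : 1 ≤ a k)
    (hdigits : n = ∑ j ∈ Finset.range (k + 1), a j * b ^ j)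
    (Y : ℕ → ℕ → Ω → ℝ) (hY : ∀ j ℓ, MemLp (Y j ℓ) 2 ℙ)
    (C : ℝ) (hC : 0 ≤ C)
    (hvar : ∀ j ℓ, j ≤ k → ℓ < a j →
      variance (Y j ℓ) ℙ ≤ C * ((b : ℝ) ^ (2 * j))⁻¹) :
    variance (fun ω => (1 / (n : ℝ)) * ∑ j ∈ Finset.range (k + 1),
        ∑ ℓ ∈ Finset.range (a j), (b : ℝ) ^ j * Y j ℓ ω) ℙ
      ≤ C * ((b : ℝ) - 1) ^ 2 * ((k : ℝ) + 1) ^ 2 / (n : ℝ) ^ 2 :=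
  variance_rate_extension_critical_general b hb k n a ha Y hY C hC hvar
end
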